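/- Let g₁, g₂, g₃ ∈ SL(2,ℝ) be positive elements such that g₁g₂, g₂g₃ and g₁g₂g₃ are also positive. Set v₀ := (1,0) ∈ ℝ², v₁ := g₁v₀, v₂ := g₁g₂v₀, v₃ := g₁g₂g₃v₀. Then det(vᵢ,vⱼ) > 0 for all 0 ≤ i < j ≤ 3, and the cross-ratio z := (det(v₀,v₃)·det(v₁,v₂))/(det(v₀,v₂)·det(v₁,v₃)) satisfies 0 < z < 1. -/

import Mathlib

/-!
`SL(2,ℝ)` preserves `det`, and `det(e₀, g e₀)` is the lower-left entry of `g`; hence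
`det(vᵢ, vⱼ)` is the lower-left entry of `g_{i+1} ⋯ g_j`, which is positive by hypothesis.
The Plücker relation `[02][13] = [01][23] + [03][12]` then exhibits the denominator of the
cross-ratio as its numerator plus a positive term.
-/

/-- `det(u,w) = u₁w₂ − u₂w₁` for `u, w ∈ ℝ²`. -/
noncomputable def ddR (u w : Fin 2 → ℝ) : ℝ := u 0 * w 1 - u 1 * w 0

open Matrix

lemma ddR_mulVec_mulVec (A : Matrix (Fin 2) (Fin 2) ℝ) (u w : Fin 2 → ℝ) :
    ddR (A *ᵥ u) (A *ᵥ w) = A.det * ddR u w := by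
  simp only [ddR, mulVec, dotProduct, Fin.sum_univ_two, det_fin_two]
  ring

lemma ddR_vecCons_mulVec (A : Matrix (Fin 2) (Fin 2) ℝ) :
    ddR ![1, 0] (A *ᵥ ![1, 0]) = A 1 0 := by
  simp [ddR, mulVec, dotProduct, Fin.sum_univ_two]

lemma ddR_mulVec_mul_mulVec {P : Matrix (Fin 2) (Fin 2) ℝ} (hP : P.det = 1)
    (Q : Matrix (Fin 2) (Fin 2) ℝ) :
    ddR (P *ᵥ ![1, 0]) ((P * Q) *ᵥ ![1, 0]) = Q 1 0 := by
  rw [← mulVec_mulVec, ddR_mulVec_mulVec, hP, one_mul, ddR_vecCons_mulVec]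

lemma ddR_plucker (a b c d : Fin 2 → ℝ) :
    ddR a c * ddR b d = ddR a b * ddR c d + ddR a d * ddR b c := by
  simp only [ddR]
  ring

theorem stmt16_general (g₁ g₂ g₃ : Matrix (Fin 2) (Fin 2) ℝ)
    (hd₁ : g₁.det = 1) (hd₂ : g₂.det = 1)
    (hp₁ : 0 < g₁ 1 0) (hp₂ : 0 < g₂ 1 0) (hp₃ : 0 < g₃ 1 0)
    (hp₁₂ : 0 < (g₁ * g₂) 1 0) (hp₂₃ : 0 < (g₂ * g₃) 1 0)
    (hp₁₂₃ : 0 < (g₁ * g₂ * g₃) 1 0) :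
    let v₀ : Fin 2 → ℝ := ![1, 0]
    let v₁ := g₁.mulVec v₀
    let v₂ := (g₁ * g₂).mulVec v₀
    let v₃ := (g₁ * g₂ * g₃).mulVec v₀
    (0 < ddR v₀ v₁ ∧ 0 < ddR v₀ v₂ ∧ 0 < ddR v₀ v₃ ∧
      0 < ddR v₁ v₂ ∧ 0 < ddR v₁ v₃ ∧ 0 < ddR v₂ v₃) ∧
    0 < (ddR v₀ v₃ * ddR v₁ v₂) / (ddR v₀ v₂ * ddR v₁ v₃) ∧
    (ddR v₀ v₃ * ddR v₁ v₂) / (ddR v₀ v₂ * ddR v₁ v₃) < 1 := by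
  intro v₀ v₁ v₂ v₃
  have hd₁₂ : (g₁ * g₂).det = 1 := by rw [det_mul, hd₁, hd₂, one_mul]
  have h₀₁ : ddR v₀ v₁ = g₁ 1 0 := ddR_vecCons_mulVec g₁
  have h₀₂ : ddR v₀ v₂ = (g₁ * g₂) 1 0 := ddR_vecCons_mulVec _
  have h₀₃ : ddR v₀ v₃ = (g₁ * g₂ * g₃) 1 0 := ddR_vecCons_mulVec _
  have h₁₂ : ddR v₁ v₂ = g₂ 1 0 := ddR_mulVec_mul_mulVec hd₁ g₂
  have h₁₃ : ddR v₁ v₃ = (g₂ * g₃) 1 0 := by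
    simp only [v₁, v₃, mul_assoc]
    exact ddR_mulVec_mul_mulVec hd₁ _
  have h₂₃ : ddR v₂ v₃ = g₃ 1 0 := ddR_mulVec_mul_mulVec hd₁₂ g₃
  have hplucker := ddR_plucker v₀ v₁ v₂ v₃
  rw [h₀₁, h₀₂, h₀₃, h₁₂, h₁₃, h₂₃] at hplucker ⊢
  refine ⟨⟨hp₁, hp₁₂, hp₁₂₃, hp₂, hp₂₃, hp₃⟩, by positivity, ?_⟩
  rw [div_lt_one (by positivity)]
  nlinarith [mul_pos hp₁ hp₃]

theorem stmt16 (g₁ g₂ g₃ : Matrix (Fin 2) (Fin 2) ℝ)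
    (hd₁ : g₁.det = 1) (hd₂ : g₂.det = 1) (hd₃ : g₃.det = 1)
    (hp₁ : 0 < g₁ 1 0) (hp₂ : 0 < g₂ 1 0) (hp₃ : 0 < g₃ 1 0)
    (hp₁₂ : 0 < (g₁ * g₂) 1 0) (hp₂₃ : 0 < (g₂ * g₃) 1 0)
    (hp₁₂₃ : 0 < (g₁ * g₂ * g₃) 1 0) :
    let v₀ : Fin 2 → ℝ := ![1, 0]
    let v₁ := g₁.mulVec v₀
    let v₂ := (g₁ * g₂).mulVec v₀
    let v₃ := (g₁ * g₂ * g₃).mulVec v₀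
    (0 < ddR v₀ v₁ ∧ 0 < ddR v₀ v₂ ∧ 0 < ddR v₀ v₃ ∧
      0 < ddR v₁ v₂ ∧ 0 < ddR v₁ v₃ ∧ 0 < ddR v₂ v₃) ∧
    0 < (ddR v₀ v₃ * ddR v₁ v₂) / (ddR v₀ v₂ * ddR v₁ v₃) ∧
    (ddR v₀ v₃ * ddR v₁ v₂) / (ddR v₀ v₂ * ddR v₁ v₃) < 1 :=
  stmt16_general g₁ g₂ g₃ hd₁ hd₂ hp₁ hp₂ hp₃ hp₁₂ hp₂₃ hp₁₂₃
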